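/- A fixed point of a contraction preserving a closed set of livelock-free fair processes is itself livelock-free and fair: suppose F : T↓ → T↓ is contractive with respect to d_W and maps every livelock-free W-fair element of T↓ to a livelock-free W-fair element. Then the unique fixed point μF = lim F^n(STOP) is livelock-free, and every infinite trace of μF contains infinitely many events from W. -/

import Mathlib

/-!
Two processes are `2^{-n}`-close in `d_W` exactly when they agree on all behaviour of
`W`-length at most `n`. Along the iterates `F^k(STOP)` of a contraction these restrictions
are therefore eventually constant at every level, and the process of eventual traces and
eventual divergences agrees with the iterates level by level; this makes it the unique fixed
point. Livelock-freedom and fairness pass to the limit because a divergence `s`, or all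
prefixes of an infinite trace with only `B` events from `W`, are already visible at level
`lengthU s + 1`, resp. `B + 1`, where the limit coincides with a livelock-free fair iterate.
-/

open scoped Classical

namespace CSPLL

variable {E : Type*}

/-- Events: `none` is the termination signal ✓, `some a` is a visible event. -/
abbrev Ev (E : Type*) := Option E

/-- A member of `Σ^{*✓}`: the termination event ✓ may occur only as the last element. -/
def ValidTrace (s : List (Ev E)) : Prop := (none : Ev E) ∉ s.dropLast

/-- The semantic domain `T↓`: pairs `(T, D)` of (behavioural) traces and divergences
satisfying the axioms of the divergence-strict traces model. -/
structure TD (E : Type*) where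
  T : Set (List (Ev E))
  D : Set (List (Ev E))
  valid : ∀ s ∈ T, ValidTrace s
  d_sub : D ⊆ T
  nonempty : [] ∈ T
  prefix_closed : ∀ s t : List (Ev E), s ++ t ∈ T → s ∈ T
  tick_div : ∀ s : List (Ev E), s ++ [none] ∈ D → s ∈ D
  div_ext : ∀ s t : List (Ev E), s ∈ D → (none : Ev E) ∉ s → ValidTrace t → s ++ t ∈ D

/-- Raw trace/divergence pairs. -/
abbrev Pair (E : Type*) := Set (List (Ev E)) × Set (List (Ev E))

def TD.pair (P : TD E) : Pair E := (P.T, P.D)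

/-- `lengthU U s` counts the occurrences of events from `U` in the trace `s`. -/
noncomputable def lengthU (U : Set E) (s : List (Ev E)) : ℕ :=
  (s.filter fun x => decide (∃ a ∈ U, x = some a)).length

/-- Restriction `(T,D) ↾_U n` of a trace/divergence pair to `U`-length `n`. -/
noncomputable def restrict (U : Set E) (n : ℕ) (P : Pair E) : Pair E :=
  let D' := P.2 ∪ {u | ∃ s t, s ∈ P.1 ∧ (none : Ev E) ∉ s ∧ lengthU U s = n ∧
                       ValidTrace t ∧ u = s ++ t}
  (D' ∪ {s ∈ P.1 | lengthU U s ≤ n}, D')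

/-- The metric `d_U(P,Q) = inf {2^{-n} | P ↾_U n = Q ↾_U n}` (taken in `[0,1]`). -/
noncomputable def dU (U : Set E) (P Q : Pair E) : ℝ :=
  sInf {x : ℝ | ∃ n : ℕ, restrict U n P = restrict U n Q ∧ x = (1 / 2 : ℝ) ^ n}

noncomputable def dTD (U : Set E) (P Q : TD E) : ℝ := dU U P.pair Q.pair

/-- The process STOP: the element `({⟨⟩}, ∅)` of `T↓`. -/
def STOP (E : Type*) : TD E where
  T := {[]}
  D := ∅
  valid := by
    intro s hs
    rw [Set.mem_singleton_iff] at hs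
    subst hs
    simp [ValidTrace]
  d_sub := by simp
  nonempty := rfl
  prefix_closed := by
    intro s t hs
    rw [Set.mem_singleton_iff] at hs
    rcases List.append_eq_nil_iff.mp hs with ⟨h1, _⟩
    simp [h1]
  tick_div := by simp
  div_ext := by simp

/-- `P` is `W`-fair: every infinite trace of `P` contains infinitely many `W`-events. -/
def WFair (W : Set E) (P : TD E) : Prop :=
  ∀ u : ℕ → E, (∀ n, (List.range n).map (fun i => (some (u i) : Ev E)) ∈ P.T) →
    {n | u n ∈ W}.Infinite

section Restriction

variable (U : Set E)

lemma lengthU_append (s t : List (Ev E)) :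
    lengthU U (s ++ t) = lengthU U s + lengthU U t := by
  simp [lengthU, List.filter_append]

lemma exists_append_lengthU_eq :
    ∀ (s : List (Ev E)) (m : ℕ), m ≤ lengthU U s →
      ∃ s₁ s₂ : List (Ev E), s = s₁ ++ s₂ ∧ lengthU U s₁ = m
  | s, 0, _ => ⟨[], s, rfl, by simp [lengthU]⟩
  | [], m + 1, hm => by simp [lengthU] at hm
  | a :: s, m + 1, hm => by
    have hcons (s : List (Ev E)) := lengthU_append U [a] s
    have ha : lengthU U [a] ≤ 1 := List.length_filter_le _ _
    simp only [List.singleton_append] at hcons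
    obtain ⟨s₁, s₂, rfl, hs₁⟩ := exists_append_lengthU_eq s (m + 1 - lengthU U [a])
      (by rw [hcons] at hm; omega)
    exact ⟨a :: s₁, s₂, rfl, by rw [hcons]; omega⟩

lemma validTrace_append {s t : List (Ev E)} (hs : (none : Ev E) ∉ s)
    (ht : ValidTrace t) : ValidTrace (s ++ t) := by
  rcases eq_or_ne t [] with rfl | ht'
  · simpa [ValidTrace] using fun h => hs ((List.dropLast_sublist s).subset h)
  · simpa [ValidTrace, List.dropLast_append_of_ne_nil ht'] using ⟨hs, ht⟩

lemma mem_restrict_fst {P : Pair E} {n : ℕ} {u : List (Ev E)} :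
    u ∈ (restrict U n P).1 ↔ u ∈ (restrict U n P).2 ∨ (u ∈ P.1 ∧ lengthU U u ≤ n) :=
  Iff.rfl

lemma mem_restrict_snd {P : Pair E} {n : ℕ} {u : List (Ev E)} :
    u ∈ (restrict U n P).2 ↔ u ∈ P.2 ∨ ∃ s t, s ∈ P.1 ∧ (none : Ev E) ∉ s ∧
      lengthU U s = n ∧ ValidTrace t ∧ u = s ++ t := by
  simp [restrict]

/-- A divergence of `U`-length above `n` is already produced by the extension part of the
restriction, so only the divergences of `U`-length at most `n` matter. -/
lemma mem_restrict_snd_iff (P : TD E) {n : ℕ} {u : List (Ev E)} :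
    u ∈ (restrict U n P.pair).2 ↔ (u ∈ P.D ∧ lengthU U u ≤ n) ∨ ∃ s t, s ∈ P.T ∧
      (none : Ev E) ∉ s ∧ lengthU U s = n ∧ ValidTrace t ∧ u = s ++ t := by
  rw [mem_restrict_snd]
  constructor
  · rintro (hu | hext)
    · by_cases hle : lengthU U u ≤ n
      · exact Or.inl ⟨hu, hle⟩
      obtain ⟨s, t, rfl, hs⟩ := exists_append_lengthU_eq U u n (by omega)
      have ht : t ≠ [] := by rintro rfl; simp [hs] at hle
      have hvalid : (none : Ev E) ∉ s ++ t.dropLast := by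
        simpa [ValidTrace, List.dropLast_append_of_ne_nil ht] using P.valid _ (P.d_sub hu)
      rw [List.mem_append, not_or] at hvalid
      exact Or.inr ⟨s, t, P.prefix_closed s t (P.d_sub hu), hvalid.1, hs, hvalid.2, rfl⟩
    · exact Or.inr hext
  · rintro (hu | hext)
    · exact Or.inl hu.1
    · exact Or.inr hext

lemma restrict_le_of_forall_lengthU_le {P Q : TD E} {n : ℕ}
    (h : ∀ s, lengthU U s ≤ n → (s ∈ P.T ↔ s ∈ Q.T) ∧ (s ∈ P.D ↔ s ∈ Q.D)) :
    restrict U n P.pair ≤ restrict U n Q.pair := by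
  have hsnd : (restrict U n P.pair).2 ⊆ (restrict U n Q.pair).2 := by
    intro u
    simp only [mem_restrict_snd_iff]
    rintro (⟨hu, hl⟩ | ⟨s, t, hs, hrest⟩)
    · exact Or.inl ⟨(h u hl).2.mp hu, hl⟩
    · exact Or.inr ⟨s, t, (h s hrest.2.1.le).1.mp hs, hrest⟩
  refine Prod.le_def.mpr ⟨?_, hsnd⟩
  rintro u (hu | ⟨hu, hl⟩)
  · exact Or.inl (hsnd hu)
  · exact Or.inr ⟨(h u hl).1.mp hu, hl⟩

lemma restrict_eq_of_forall_lengthU_le {P Q : TD E} {n : ℕ}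
    (h : ∀ s, lengthU U s ≤ n → (s ∈ P.T ↔ s ∈ Q.T) ∧ (s ∈ P.D ↔ s ∈ Q.D)) :
    restrict U n P.pair = restrict U n Q.pair :=
  le_antisymm (restrict_le_of_forall_lengthU_le U h)
    (restrict_le_of_forall_lengthU_le U fun s hs => ⟨(h s hs).1.symm, (h s hs).2.symm⟩)

lemma mem_iff_of_restrict_eq {P Q : TD E} {n : ℕ}
    (h : restrict U n P.pair = restrict U n Q.pair) {s : List (Ev E)} (hs : lengthU U s < n) :
    (s ∈ P.T ↔ s ∈ Q.T) ∧ (s ∈ P.D ↔ s ∈ Q.D) := by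
  have hD : ∀ R : TD E, s ∈ (restrict U n R.pair).2 ↔ s ∈ R.D := fun R => by
    rw [mem_restrict_snd_iff]
    refine ⟨?_, fun hR => Or.inl ⟨hR, hs.le⟩⟩
    rintro (hR | ⟨s', t, -, -, hs', -, rfl⟩)
    · exact hR.1
    · rw [lengthU_append] at hs
      omega
  have hT : ∀ R : TD E, s ∈ (restrict U n R.pair).1 ↔ s ∈ R.T := fun R => by
    rw [mem_restrict_fst, hD]
    exact ⟨fun hR => hR.elim (R.d_sub ·) And.left, fun hR => Or.inr ⟨hR, hs.le⟩⟩
  rw [← hT P, ← hT Q, ← hD P, ← hD Q, h]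
  exact ⟨Iff.rfl, Iff.rfl⟩

lemma restrict_eq_of_le {P Q : TD E} {m n : ℕ} (hmn : m ≤ n)
    (h : restrict U n P.pair = restrict U n Q.pair) :
    restrict U m P.pair = restrict U m Q.pair := by
  rcases hmn.eq_or_lt with rfl | hlt
  · exact h
  · exact restrict_eq_of_forall_lengthU_le U fun s hs =>
      mem_iff_of_restrict_eq U h (hs.trans_lt hlt)

lemma eq_of_forall_restrict_eq {P Q : TD E} (h : ∀ n, restrict U n P.pair = restrict U n Q.pair) :
    P = Q := by
  have hmem (s : List (Ev E)) := mem_iff_of_restrict_eq U (h (lengthU U s + 1)) (Nat.lt_succ_self _)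
  cases P
  cases Q
  simpa only [TD.mk.injEq] using
    ⟨Set.ext fun s => (hmem s).1, Set.ext fun s => (hmem s).2⟩

lemma restrict_zero (P : TD E) :
    restrict U 0 P.pair = ({t | ValidTrace t}, {t | ValidTrace t}) := by
  have hsnd : (restrict U 0 P.pair).2 = {t | ValidTrace t} := by
    ext u
    rw [mem_restrict_snd]
    constructor
    · rintro (hu | ⟨s, t, -, hs, -, ht, rfl⟩)
      · exact P.valid u (P.d_sub hu)
      · exact validTrace_append hs ht
    · exact fun hu => Or.inr ⟨[], u, P.nonempty, by simp, by simp [lengthU], hu, rfl⟩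
  refine Prod.ext (Set.ext fun u => ?_) hsnd
  rw [mem_restrict_fst, hsnd]
  exact ⟨fun hu => hu.elim id (P.valid u ·.1), Or.inl⟩

end Restriction

section Metric

variable (U : Set E)

lemma bddBelow_agreementLevels (P Q : TD E) :
    BddBelow {x : ℝ | ∃ n : ℕ, restrict U n P.pair = restrict U n Q.pair ∧ x = (1 / 2 : ℝ) ^ n} :=
  ⟨0, by rintro x ⟨n, -, rfl⟩; positivity⟩

lemma nonempty_agreementLevels (P Q : TD E) :
    {x : ℝ | ∃ n : ℕ, restrict U n P.pair = restrict U n Q.pair ∧ x = (1 / 2 : ℝ) ^ n}.Nonempty :=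
  ⟨1, 0, (restrict_zero U P).trans (restrict_zero U Q).symm, by norm_num⟩

lemma dTD_le_of_restrict_eq {P Q : TD E} {n : ℕ}
    (h : restrict U n P.pair = restrict U n Q.pair) : dTD U P Q ≤ (1 / 2 : ℝ) ^ n :=
  csInf_le (bddBelow_agreementLevels U P Q) ⟨n, h, rfl⟩

lemma dTD_le_one (P Q : TD E) : dTD U P Q ≤ 1 := by
  simpa using dTD_le_of_restrict_eq U (n := 0) ((restrict_zero U P).trans (restrict_zero U Q).symm)

lemma dTD_nonneg (P Q : TD E) : 0 ≤ dTD U P Q :=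
  le_csInf (nonempty_agreementLevels U P Q) (by rintro x ⟨n, -, rfl⟩; positivity)

lemma restrict_eq_of_dTD_le {P Q : TD E} {n : ℕ} (h : dTD U P Q ≤ (1 / 2 : ℝ) ^ n) :
    restrict U n P.pair = restrict U n Q.pair := by
  have hlt : dTD U P Q < (1 / 2 : ℝ) ^ n * 2 := by
    linarith [pow_pos (by norm_num : (0 : ℝ) < 1 / 2) n]
  obtain ⟨_, ⟨k, hk, rfl⟩, hkn⟩ := exists_lt_of_csInf_lt
    (nonempty_agreementLevels U P Q) hlt
  have hnk : n ≤ k := by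
    rw [← Nat.lt_succ_iff, ← pow_lt_pow_iff_right_of_lt_one₀ (by norm_num : (0 : ℝ) < 1 / 2)
      (by norm_num)]
    rw [pow_succ]
    linarith
  exact restrict_eq_of_le U hnk hk

lemma eq_of_dTD_eq_zero {P Q : TD E} (h : dTD U P Q = 0) : P = Q :=
  eq_of_forall_restrict_eq U fun n => restrict_eq_of_dTD_le U (h ▸ by positivity)

end Metric

section Limit

open Filter

variable (U : Set E)

/-- Convergence of `P k` to `L` in `d_U`. -/
def RestrictTendsto (P : ℕ → TD E) (L : TD E) : Prop :=
  ∀ n, ∃ K, ∀ k ≥ K, restrict U n (P k).pair = restrict U n L.pair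

def TDlim (P : ℕ → TD E) : TD E where
  T := {s | ∀ᶠ k in atTop, s ∈ (P k).T}
  D := {s | ∀ᶠ k in atTop, s ∈ (P k).D}
  valid s h := (P _).valid s h.exists.choose_spec
  d_sub _ h := h.mono fun k hk => (P k).d_sub hk
  nonempty := Eventually.of_forall fun k => (P k).nonempty
  prefix_closed s t h := h.mono fun k => (P k).prefix_closed s t
  tick_div s h := h.mono fun k => (P k).tick_div s
  div_ext s t h hs ht := h.mono fun k hk => (P k).div_ext s t hk hs ht

lemma restrictTendsto_TDlim {P : ℕ → TD E}
    (hP : ∀ n, ∃ K, ∀ k ≥ K, restrict U n (P k).pair = restrict U n (P K).pair) :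
    RestrictTendsto U P (TDlim P) := by
  intro n
  obtain ⟨K, hK⟩ := hP (n + 1)
  have hmem (s : List (Ev E)) (hs : lengthU U s ≤ n) (k : ℕ) (hk : K ≤ k) :=
    mem_iff_of_restrict_eq U (hK k hk) (Nat.lt_succ_of_le hs)
  have hlim : restrict U n (P K).pair = restrict U n (TDlim P).pair := by
    refine restrict_eq_of_forall_lengthU_le U fun s hs => ⟨⟨fun h => ?_, fun h => ?_⟩,
      ⟨fun h => ?_, fun h => ?_⟩⟩
    · exact eventually_atTop.mpr ⟨K, fun k hk => (hmem s hs k hk).1.mpr h⟩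
    · obtain ⟨k, hks, hk⟩ := (h.and (eventually_ge_atTop K)).exists
      exact (hmem s hs k hk).1.mp hks
    · exact eventually_atTop.mpr ⟨K, fun k hk => (hmem s hs k hk).2.mpr h⟩
    · obtain ⟨k, hks, hk⟩ := (h.and (eventually_ge_atTop K)).exists
      exact (hmem s hs k hk).2.mp hks
  exact ⟨K, fun k hk => (restrict_eq_of_le U n.le_succ (hK k hk)).trans hlim⟩

lemma dTD_lt_of_restrictTendsto {P : ℕ → TD E} {L : TD E} (h : RestrictTendsto U P L)
    {ε : ℝ} (hε : 0 < ε) : ∃ N : ℕ, ∀ n ≥ N, dTD U (P n) L < ε := by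
  obtain ⟨m, hm⟩ := exists_pow_lt_of_lt_one hε (by norm_num : (1 / 2 : ℝ) < 1)
  obtain ⟨K, hK⟩ := h m
  exact ⟨K, fun n hn => (dTD_le_of_restrict_eq U (hK n hn)).trans_lt hm⟩

end Limit

section Closed

variable {U : Set E}

lemma d_eq_empty_of_restrictTendsto {P : ℕ → TD E} {L : TD E} (h : RestrictTendsto U P L)
    (hP : ∀ k, (P k).D = ∅) : L.D = ∅ := by
  refine Set.eq_empty_of_forall_notMem fun s hs => ?_
  obtain ⟨K, hK⟩ := h (lengthU U s + 1)
  have hsK := (mem_iff_of_restrict_eq U (hK K le_rfl) (Nat.lt_succ_self _)).2.mpr hs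
  rw [hP K] at hsK
  exact hsK

lemma lengthU_map_range (u : ℕ → E) (n : ℕ) :
    lengthU U ((List.range n).map fun i => (some (u i) : Ev E)) =
      ((Finset.range n).filter (u · ∈ U)).card := by
  induction n with
  | zero => simp [lengthU]
  | succ n ih =>
    rw [List.range_succ, List.map_append, lengthU_append, ih, Finset.range_add_one,
      Finset.filter_insert]
    split_ifs with hn <;> simp [lengthU, hn]

lemma wFair_of_restrictTendsto {P : ℕ → TD E} {L : TD E} (h : RestrictTendsto U P L)
    (hP : ∀ k, WFair U (P k)) : WFair U L := by
  intro u hu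
  by_contra hfin
  rw [Set.not_infinite] at hfin
  have hbound (n : ℕ) : lengthU U ((List.range n).map fun i => (some (u i) : Ev E)) <
      hfin.toFinset.card + 1 := by
    rw [lengthU_map_range, Nat.lt_succ_iff]
    exact Finset.card_le_card fun i hi => hfin.mem_toFinset.mpr (Finset.mem_filter.mp hi).2
  obtain ⟨K, hK⟩ := h (hfin.toFinset.card + 1)
  exact hP K u (fun n => (mem_iff_of_restrict_eq U (hK K le_rfl) (hbound n)).1.mpr (hu n)) hfin

lemma wFair_STOP : WFair U (STOP E) := fun u hu => by
  simpa [STOP, List.range_succ] using hu 1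

end Closed

section Contraction

variable {U : Set E} {F : TD E → TD E} {c : ℝ}

lemma restrict_map_eq_of_restrict_eq (hc : c ≤ 1)
    (hF : ∀ P Q : TD E, dTD U (F P) (F Q) ≤ c * dTD U P Q) {P Q : TD E} {n : ℕ}
    (h : restrict U n P.pair = restrict U n Q.pair) :
    restrict U n (F P).pair = restrict U n (F Q).pair :=
  restrict_eq_of_dTD_le U <| calc
    dTD U (F P) (F Q) ≤ c * dTD U P Q := hF P Q
    _ ≤ dTD U P Q := mul_le_of_le_one_left (dTD_nonneg U P Q) hc
    _ ≤ (1 / 2) ^ n := dTD_le_of_restrict_eq U h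

lemma dTD_iterate_succ_le (hc : 0 ≤ c)
    (hF : ∀ P Q : TD E, dTD U (F P) (F Q) ≤ c * dTD U P Q) (P : TD E) (k : ℕ) :
    dTD U (F^[k] P) (F^[k + 1] P) ≤ c ^ k := by
  induction k with
  | zero => simpa using dTD_le_one U P (F P)
  | succ k ih =>
    rw [Function.iterate_succ_apply' F k, Function.iterate_succ_apply' F (k + 1), pow_succ']
    exact (hF _ _).trans (mul_le_mul_of_nonneg_left ih hc)

lemma restrict_iterate_eventually_const (hc₀ : 0 ≤ c) (hc₁ : c < 1)
    (hF : ∀ P Q : TD E, dTD U (F P) (F Q) ≤ c * dTD U P Q) (P : TD E) (n : ℕ) :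
    ∃ K, ∀ k ≥ K, restrict U n (F^[k] P).pair = restrict U n (F^[K] P).pair := by
  obtain ⟨K, hK⟩ := exists_pow_lt_of_lt_one (pow_pos (by norm_num : (0 : ℝ) < 1 / 2) n) hc₁
  refine ⟨K, Nat.le_induction rfl fun k hk ih => ?_⟩
  refine (restrict_eq_of_dTD_le U ?_).symm.trans ih
  calc dTD U (F^[k] P) (F^[k + 1] P) ≤ c ^ k := dTD_iterate_succ_le hc₀ hF P k
    _ ≤ c ^ K := pow_le_pow_of_le_one hc₀ hc₁.le hk
    _ ≤ (1 / 2) ^ n := hK.le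

lemma isFixedPt_of_restrictTendsto_iterate (hc : c ≤ 1)
    (hF : ∀ P Q : TD E, dTD U (F P) (F Q) ≤ c * dTD U P Q) {P L : TD E}
    (h : RestrictTendsto U (fun k => F^[k] P) L) : F L = L :=
  eq_of_forall_restrict_eq U fun n => by
    obtain ⟨K, hK⟩ := h n
    calc restrict U n (F L).pair = restrict U n (F (F^[K] P)).pair :=
          restrict_map_eq_of_restrict_eq hc hF (hK K le_rfl).symm
      _ = restrict U n (F^[K + 1] P).pair := by rw [Function.iterate_succ_apply']
      _ = restrict U n L.pair := hK (K + 1) K.le_succ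

lemma eq_of_isFixedPt (hc : c < 1) (hF : ∀ P Q : TD E, dTD U (F P) (F Q) ≤ c * dTD U P Q)
    {P Q : TD E} (hP : F P = P) (hQ : F Q = Q) : P = Q := by
  have hle : dTD U P Q ≤ c * dTD U P Q := by simpa only [hP, hQ] using hF P Q
  have hnonneg := dTD_nonneg U P Q
  exact eq_of_dTD_eq_zero U (by nlinarith)

end Contraction

/-- A fixed point of a contraction preserving the (closed) set of livelock-free
`W`-fair processes is itself livelock-free and `W`-fair; it is the limit of the
iterates `F^n(STOP)`. -/
theorem fixed_point_livelockFree_fair (W : Set E) (F : TD E → TD E)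
    (hF : ∃ c : ℝ, 0 ≤ c ∧ c < 1 ∧ ∀ P Q : TD E, dTD W (F P) (F Q) ≤ c * dTD W P Q)
    (hpres : ∀ P : TD E, P.D = ∅ → WFair W P → (F P).D = ∅ ∧ WFair W (F P)) :
    ∃ P : TD E, F P = P ∧ (∀ Q : TD E, F Q = Q → Q = P) ∧
      (∀ ε : ℝ, 0 < ε → ∃ N : ℕ, ∀ n ≥ N, dTD W (F^[n] (STOP E)) P < ε) ∧
      P.D = ∅ ∧ WFair W P := by
  obtain ⟨c, hc₀, hc₁, hF⟩ := hF
  set iter : ℕ → TD E := fun k => F^[k] (STOP E)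
  have hlim : RestrictTendsto W iter (TDlim iter) :=
    restrictTendsto_TDlim W (restrict_iterate_eventually_const hc₀ hc₁ hF (STOP E))
  have hfix : F (TDlim iter) = TDlim iter := isFixedPt_of_restrictTendsto_iterate hc₁.le hF hlim
  have hiter (k : ℕ) : (iter k).D = ∅ ∧ WFair W (iter k) := by
    induction k with
    | zero => exact ⟨rfl, wFair_STOP⟩
    | succ k ih => simpa only [iter, Function.iterate_succ_apply'] using hpres _ ih.1 ih.2
  exact ⟨TDlim iter, hfix, fun Q hQ => eq_of_isFixedPt hc₁ hF hQ hfix,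
    fun ε hε => dTD_lt_of_restrictTendsto W hlim hε,
    d_eq_empty_of_restrictTendsto hlim fun k => (hiter k).1,
    wFair_of_restrictTendsto hlim fun k => (hiter k).2⟩

end CSPLL
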